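/- Let ε > 0, n ≥ 3. The function v(r) := r(1 - r^{1/2}/2) satisfies, for L v := v'' + ((n-2)/r + 2r/(ε+r^2)) v' - (n-2)/r^2 · v, the expansion L v(r) = -(1/4)(n - 1/2) r^{-1/2} + O(r/ε) as r → 0+; in particular there exists r_0(ε) > 0 such that L v < 0 on (0, r_0(ε)). -/

import Mathlib

noncomputable def L (n : ℕ) (ε : ℝ) (V : ℝ → ℝ) (r : ℝ) : ℝ :=
  deriv (deriv V) r + (((n : ℝ) - 2) / r + 2 * r / (ε + r ^ 2)) * deriv V r
    - ((n : ℝ) - 2) / r ^ 2 * V r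

lemma deriv_v (r : ℝ) (hr : 0 < r) :
    deriv (fun r => r * (1 - Real.sqrt r / 2)) r = 1 - 3 * Real.sqrt r / 4 := by
  have hs := Real.hasDerivAt_sqrt hr.ne'
  have h : HasDerivAt (fun r : ℝ => r * (1 - Real.sqrt r / 2))
      (1 * (1 - Real.sqrt r / 2) + r * (0 - 1 / (2 * Real.sqrt r) / 2)) r :=
    (hasDerivAt_id r).mul ((hasDerivAt_const r (1:ℝ)).sub (hs.div_const 2))
  rw [h.deriv]
  have hsq : Real.sqrt r * Real.sqrt r = r := Real.mul_self_sqrt hr.le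
  have hspos : 0 < Real.sqrt r := Real.sqrt_pos.mpr hr
  field_simp
  nlinarith [hsq]

lemma deriv2_v (r : ℝ) (hr : 0 < r) :
    deriv (deriv (fun r => r * (1 - Real.sqrt r / 2))) r = -3 / (8 * Real.sqrt r) := by
  have hev : deriv (fun r => r * (1 - Real.sqrt r / 2)) =ᶠ[nhds r]
      (fun s => 1 - 3 * Real.sqrt s / 4) := by
    filter_upwards [isOpen_Ioi.mem_nhds (Set.mem_Ioi.mpr hr)] with s hs
    exact deriv_v s hs
  rw [hev.deriv_eq]
  have hs := Real.hasDerivAt_sqrt hr.ne'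
  have h : HasDerivAt (fun s : ℝ => 1 - 3 * Real.sqrt s / 4)
      (0 - 3 * (1 / (2 * Real.sqrt r)) / 4) r :=
    (hasDerivAt_const r (1:ℝ)).sub ((hs.const_mul 3).div_const 4)
  rw [h.deriv]
  have hspos : 0 < Real.sqrt r := Real.sqrt_pos.mpr hr
  field_simp
  ring

lemma Lv_eq (n : ℕ) (ε r : ℝ) (hε : 0 < ε) (hr : 0 < r) :
    L n ε (fun r => r * (1 - Real.sqrt r / 2)) r
      = -(1/4) * ((n : ℝ) - 1/2) / Real.sqrt r
        + 2 * r / (ε + r ^ 2) * (1 - 3 * Real.sqrt r / 4) := by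
  obtain ⟨s, hs0, rfl⟩ : ∃ s, 0 < s ∧ s ^ 2 = r := ⟨Real.sqrt r, Real.sqrt_pos.mpr hr, Real.sq_sqrt hr.le⟩
  have hss : Real.sqrt (s ^ 2) = s := Real.sqrt_sq hs0.le
  have hden : 0 < ε + (s ^ 2) ^ 2 := by positivity
  unfold L
  rw [deriv_v _ hr, deriv2_v _ hr, hss]
  field_simp
  simp only [hss]
  ring

theorem supersolution_near_zero (n : ℕ) (hn : 3 ≤ n) (ε : ℝ) (hε : 0 < ε) :
    (∃ C : ℝ, 0 < C ∧ ∃ r₁ ∈ Set.Ioo (0 : ℝ) 1, ∀ r ∈ Set.Ioo (0 : ℝ) r₁,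
        |L n ε (fun r => r * (1 - Real.sqrt r / 2)) r
          + (1 / 4) * ((n : ℝ) - 1 / 2) * r ^ (-(1 / 2 : ℝ))| ≤ C * r / ε) ∧
      ∃ r₀ : ℝ, 0 < r₀ ∧ ∀ r ∈ Set.Ioo (0 : ℝ) r₀,
        L n ε (fun r => r * (1 - Real.sqrt r / 2)) r < 0 := by
  constructor
  · refine ⟨2, by norm_num, 1/2, by norm_num, fun r hr => ?_⟩
    have hr0 := hr.1
    have hr1 : r < 1 := by linarith [hr.2]
    have hs0 : 0 < Real.sqrt r := Real.sqrt_pos.mpr hr0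
    have hsq : Real.sqrt r * Real.sqrt r = r := Real.mul_self_sqrt hr0.le
    have hs1 : Real.sqrt r < 1 := by nlinarith
    have hrpow : r ^ (-(1 / 2 : ℝ)) = 1 / Real.sqrt r := by
      rw [Real.rpow_neg hr0.le, Real.sqrt_eq_rpow]; norm_num
    have hkey : L n ε (fun r => r * (1 - Real.sqrt r / 2)) r
        + (1 / 4) * ((n : ℝ) - 1 / 2) * r ^ (-(1 / 2 : ℝ))
        = 2 * r / (ε + r ^ 2) * (1 - 3 * Real.sqrt r / 4) := by
      rw [Lv_eq n ε r hε hr0, hrpow]; ring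
    rw [hkey]
    have hden : 0 < ε + r ^ 2 := by positivity
    have hfac : 0 ≤ 1 - 3 * Real.sqrt r / 4 := by nlinarith
    rw [abs_of_nonneg (by positivity)]
    rw [div_mul_eq_mul_div, div_le_div_iff₀ hden hε]
    nlinarith [mul_nonneg (mul_nonneg hr0.le hs0.le) hε.le, pow_pos hr0 3]
  · refine ⟨min ε (1/16), lt_min hε (by norm_num), fun r hr => ?_⟩
    have hr0 := hr.1
    have hrε : r < ε := lt_of_lt_of_le hr.2 (min_le_left _ _)
    have hr16 : r < 1/16 := lt_of_lt_of_le hr.2 (min_le_right _ _)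
    have hs0 : 0 < Real.sqrt r := Real.sqrt_pos.mpr hr0
    have hsq : Real.sqrt r * Real.sqrt r = r := Real.mul_self_sqrt hr0.le
    have hs4 : Real.sqrt r < 1/4 := by nlinarith
    rw [Lv_eq n ε r hε hr0]
    have hn3 : (3:ℝ) ≤ (n:ℝ) := by exact_mod_cast hn
    have hden : 0 < ε + r ^ 2 := by positivity
    have h1 : (5:ℝ)/2 ≤ (1/4) * ((n:ℝ) - 1/2) / Real.sqrt r := by
      rw [le_div_iff₀ hs0]
      nlinarith
    have h2 : 2 * r / (ε + r ^ 2) * (1 - 3 * Real.sqrt r / 4) < 2 := by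
      rw [div_mul_eq_mul_div, div_lt_iff₀ hden]
      nlinarith [mul_nonneg hr0.le hs0.le, sq_nonneg r]
    have hrw : -(1/4) * ((n:ℝ) - 1/2) / Real.sqrt r
        = -((1/4) * ((n:ℝ) - 1/2) / Real.sqrt r) := by ring
    rw [hrw]
    linarith
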